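/- arXiv:1804.00879 — 4 statements merged into one kernel-verified Lean document; each statement's English description precedes it below -/
import Mathlib

section
/- In an ambidextrous adjunction F ⊣ G between 2-categories (i.e., an adjunction where the unit η : id → GF and counit ε : FG → id each admit right adjoints η^R and ε^R as 2-morphisms), the 2-morphism ε^R : id → FG exhibits F as right adjoint to G; in other words, G is simultaneously left and right adjoint to F. -/
/-!
The right adjoint of a composite of left adjoints is the composite of the right adjoints in
the reverse order, and pseudofunctors preserve adjunctions. Hence `F η_X ≫ ε_{F X}` has right
adjoint `ε^R_{F X} ≫ F η^R_X`, and `η_{G Y} ≫ G ε_Y` has right adjoint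
`G ε^R_Y ≫ η^R_{G Y}`.
The triangle isomorphisms of `F ⊣ G` identify these left adjoints with identities, so by
uniqueness of adjoints the right adjoints are identities as well: these are the triangle
isomorphisms of `G ⊣ F`.
-/

open CategoryTheory CategoryTheory.Bicategory

theorem CategoryTheory.Bicategory.Adjunction.nonempty_right_iso_id_of_left_iso_id
    {B : Type*} [Bicategory B] {a : B} {f g : a ⟶ a} (adj : f ⊣ g) (i : f ≅ 𝟙 a) :
    Nonempty (g ≅ 𝟙 a) :=
  ⟨(conjugateIsoEquiv (Adjunction.id a) adj i).symm⟩

theorem ambidextrous_adjunction_right_adjoint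
    {B C : Type*} [Bicategory B] [Bicategory C]
    (F : Pseudofunctor B C) (G : Pseudofunctor C B)
    -- the adjunction F ⊣ G, pointwise: unit, counit and triangle isomorphisms
    (η : ∀ X : B, X ⟶ G.obj (F.obj X))
    (ε' : ∀ Y : C, F.obj (G.obj Y) ⟶ Y)
    (t₁ : ∀ X : B, (F.map (η X) ≫ ε' (F.obj X)) ≅ 𝟙 (F.obj X))
    (t₂ : ∀ Y : C, (η (G.obj Y) ≫ G.map (ε' Y)) ≅ 𝟙 (G.obj Y))
    -- ambidexterity: the unit and the counit admit right adjoints η^R and ε^R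
    (ηR : ∀ X : B, G.obj (F.obj X) ⟶ X)
    (adjη : ∀ X : B, Bicategory.Adjunction (η X) (ηR X))
    (εR : ∀ Y : C, Y ⟶ F.obj (G.obj Y))
    (adjε : ∀ Y : C, Bicategory.Adjunction (ε' Y) (εR Y)) :
    -- conclusion: ε^R is the unit and η^R the counit of an adjunction G ⊣ F,
    -- i.e. G is also *left* adjoint to F (triangle isomorphisms for G ⊣ F)
    (∀ X : B, Nonempty ((εR (F.obj X) ≫ F.map (ηR X)) ≅ 𝟙 (F.obj X))) ∧
    (∀ Y : C, Nonempty ((G.map (εR Y) ≫ ηR (G.obj Y)) ≅ 𝟙 (G.obj Y))) :=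
  ⟨fun X => Adjunction.nonempty_right_iso_id_of_left_iso_id
      ((F.mapAdjunction (adjη X)).comp (adjε (F.obj X))) (t₁ X),
    fun Y => Adjunction.nonempty_right_iso_id_of_left_iso_id
      ((adjη (G.obj Y)).comp (G.mapAdjunction (adjε Y))) (t₂ Y)⟩
end

section
/- Let f : D → C be a rigid symmetric monoidal functor and x an object of C. If x is dualizable with dual x^∨, then the internal Hom functor Hom(x,−) : C → D, right adjoint to d ↦ f(d) ⊗ x, is computed by Hom(x,y) ≃ f^R(x^∨ ⊗ y); in particular it preserves colimits and is D-linear. -/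
open CategoryTheory MonoidalCategory

def tensorRightAdjunctionTensorLeft {C : Type*} [Category C] [MonoidalCategory C]
    [BraidedCategory C] (x xd : C) [ExactPairing x xd] : tensorRight x ⊣ tensorLeft xd :=
  (tensorRightAdjunction x xd).ofNatIsoRight (BraidedCategory.tensorLeftIsoTensorRight xd).symm

theorem rigid_internal_hom_of_dualizable_general
    {D C : Type*} [Category D] [Category C]
    [MonoidalCategory C] [SymmetricCategory C]
    (f : D ⥤ C)
    (fR : C ⥤ D) (adjf : f ⊣ fR)
    (x xd : C) [ExactPairing x xd]
    (H : C ⥤ D) (adjH : (f ⋙ tensorRight x) ⊣ H) :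
    Nonempty (H ≅ tensorLeft xd ⋙ fR) :=
  ⟨adjH.rightAdjointUniq (adjf.comp (tensorRightAdjunctionTensorLeft x xd))⟩

theorem rigid_internal_hom_of_dualizable
    {D C : Type*} [Category D] [Category C]
    [MonoidalCategory D] [MonoidalCategory C] [SymmetricCategory C]
    (f : D ⥤ C) [f.Monoidal]
    (fR : C ⥤ D) (adjf : f ⊣ fR)
    (x xd : C) [ExactPairing x xd]
    (H : C ⥤ D) (adjH : (f ⋙ tensorRight x) ⊣ H) :
    Nonempty (H ≅ tensorLeft xd ⋙ fR) :=
  rigid_internal_hom_of_dualizable_general f fR adjf x xd H adjH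
end

section
/- Let C be a symmetric monoidal (∞,n)-category. The trace of the identity automorphism on a dualizable object A (the dimension of A) equals the composite 1 → A ⊗ A^∨ → 1 of coevaluation followed by evaluation, and the trace functor Tr : Aut(C) → ΩC is symmetric monoidal: Tr(A ⊗ B, a ⊗ b) ≃ Tr(A,a) ⊗ Tr(B,b) for dualizable A, B with automorphisms a, b. (For n = 1: in any symmetric monoidal category, for dualizable objects A, B with automorphisms a, b, the trace of a ⊗ b on A ⊗ B equals the product (composite under ⊗ in End(1)) of the traces of a and b.) -/
/-!
Two exact pairings exhibiting `Xd` as a dual of `X` differ by the adjoint mate of `𝟙 X`, which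
slides through the trace diagram, so the trace may be computed with Mathlib's tensor pairing on
`X ⊗ Y`, whose coevaluation and evaluation are nested cups and caps. In a symmetric category the
braided evaluation of that pairing is again a pair of nested braided caps, so the trace diagram
of `a ⊗ b` is the one of `a` with the closed loop `Tr b` inserted on a wire. A scalar on a wire
can be pulled out of a closed diagram, which leaves `Tr a ≫ Tr b`.
-/

open CategoryTheory MonoidalCategory BraidedCategory

namespace Stmt13

variable {C : Type*} [Category C] [MonoidalCategory C] [SymmetricCategory C]

/-- The trace of `a : X ⟶ X`, for a dualizable object `X` with dual `Xd`:
`1 → X ⊗ Xd → X ⊗ Xd → Xd ⊗ X → 1`. -/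
def mtrace (X Xd : C) [ExactPairing X Xd] (a : X ⟶ X) : 𝟙_ C ⟶ 𝟙_ C :=
  η_ X Xd ≫ (a ▷ Xd) ≫ (β_ X Xd).hom ≫ ε_ X Xd

lemma mtrace_id (X Xd : C) [ExactPairing X Xd] :
    mtrace X Xd (𝟙 X) = η_ X Xd ≫ (β_ X Xd).hom ≫ ε_ X Xd := by
  rw [mtrace, id_whiskerRight, Category.id_comp]

lemma mtrace_eq_of_dual_hom {X Xd Xd' : C} [ExactPairing X Xd] [ExactPairing X Xd']
    (j : Xd ⟶ Xd') (hη : η_ X Xd ≫ X ◁ j = η_ X Xd') (hε : j ▷ X ≫ ε_ X Xd' = ε_ X Xd)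
    (a : X ⟶ X) : mtrace X Xd' a = mtrace X Xd a := by
  rw [mtrace, mtrace, ← hη, ← hε, Category.assoc, whisker_exchange_assoc,
    braiding_naturality_right_assoc]

lemma mtrace_congr_exactPairing (X Xd : C) (p q : ExactPairing X Xd) (a : X ⟶ X) :
    @mtrace C _ _ _ X Xd p a = @mtrace C _ _ _ X Xd q a := by
  refine @mtrace_eq_of_dual_hom C _ _ _ X Xd Xd q p (rightDualIso q p).hom ?_ ?_ a
  · have h := @coevaluation_comp_rightAdjointMate C _ _ X X
      (@HasRightDual.mk C _ _ X Xd p) (@HasRightDual.mk C _ _ X Xd q) (𝟙 X)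
    rwa [id_whiskerRight, Category.comp_id] at h
  · have h := @rightAdjointMate_comp_evaluation C _ _ X X
      (@HasRightDual.mk C _ _ X Xd p) (@HasRightDual.mk C _ _ X Xd q) (𝟙 X)
    rwa [whiskerLeft_id, Category.id_comp] at h

lemma braiding_whiskerRight_comp_whiskerLeft {X Xd : C} (Z : C) (F : X ⊗ Xd ⟶ 𝟙_ C) :
    (β_ X Z).hom ▷ Xd ⊗≫ Z ◁ F = 𝟙 _ ⊗≫ X ◁ (β_ Z Xd).hom ⊗≫ F ▷ Z ⊗≫ 𝟙 _ := by
  symm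
  calc 𝟙 _ ⊗≫ X ◁ (β_ Z Xd).hom ⊗≫ F ▷ Z ⊗≫ 𝟙 _
      = 𝟙 _ ⊗≫ X ◁ (β_ Z Xd).hom ⊗≫ (F ▷ Z ≫ (β_ (𝟙_ C) Z).hom) ⊗≫ 𝟙 _ := by
        rw [braiding_tensorUnit_left]; monoidal
    _ = 𝟙 _ ⊗≫ X ◁ ((β_ Z Xd).hom ≫ (β_ Xd Z).hom) ⊗≫ (β_ X Z).hom ▷ Xd ⊗≫ Z ◁ F := by
        rw [braiding_naturality_left, braiding_tensor_left_hom]; monoidal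
    _ = (β_ X Z).hom ▷ Xd ⊗≫ Z ◁ F := by
        rw [SymmetricCategory.symmetry]; monoidal

lemma braiding_comp_nestedCaps {X Xd Y Yd : C} (f : Xd ⊗ X ⟶ 𝟙_ C) (g : Yd ⊗ Y ⟶ 𝟙_ C) :
    (β_ (X ⊗ Y) (Yd ⊗ Xd)).hom ≫ (𝟙 _ ⊗≫ Yd ◁ (f ▷ Y) ⊗≫ g) =
      𝟙 _ ⊗≫ X ◁ ((β_ Y Yd).hom ≫ g) ▷ Xd ⊗≫ (β_ X Xd).hom ≫ f := by
  set F := (β_ X Xd).hom ≫ f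
  calc (β_ (X ⊗ Y) (Yd ⊗ Xd)).hom ≫ (𝟙 _ ⊗≫ Yd ◁ (f ▷ Y) ⊗≫ g)
      = 𝟙 _ ⊗≫ X ◁ (β_ Y Yd).hom ▷ Xd ⊗≫ X ◁ Yd ◁ (β_ Y Xd).hom ⊗≫
          ((β_ X Yd).hom ▷ Xd ⊗≫ Yd ◁ F) ▷ Y ⊗≫ g := by
        rw [braiding_tensor_left_hom, braiding_tensor_right_hom, braiding_tensor_right_hom]
        monoidal
    _ = 𝟙 _ ⊗≫ X ◁ (β_ Y Yd).hom ▷ Xd ⊗≫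
          X ◁ (Yd ◁ (β_ Y Xd).hom ⊗≫ (β_ Yd Xd).hom ▷ Y) ⊗≫ F ▷ (Yd ⊗ Y) ⊗≫ g := by
        rw [braiding_whiskerRight_comp_whiskerLeft]
        monoidal
    _ = 𝟙 _ ⊗≫ X ◁ (β_ Y Yd).hom ▷ Xd ⊗≫ X ◁ (β_ (Yd ⊗ Y) Xd).hom ⊗≫
          (F ▷ (Yd ⊗ Y) ≫ 𝟙_ C ◁ g) ⊗≫ 𝟙 _ := by
        rw [braiding_tensor_left_hom]
        monoidal
    _ = 𝟙 _ ⊗≫ X ◁ (β_ Y Yd).hom ▷ Xd ⊗≫ X ◁ ((β_ (Yd ⊗ Y) Xd).hom ≫ Xd ◁ g) ⊗≫ F := by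
        rw [← whisker_exchange]
        monoidal
    _ = 𝟙 _ ⊗≫ X ◁ ((β_ Y Yd).hom ≫ g) ▷ Xd ⊗≫ (β_ X Xd).hom ≫ f := by
        rw [← braiding_naturality_left, braiding_tensorUnit_left]
        monoidal

lemma endUnit_whiskerRight_eq_whiskerLeft (s : 𝟙_ C ⟶ 𝟙_ C) (Z : C) :
    s ▷ Z = 𝟙 _ ⊗≫ Z ◁ s ⊗≫ 𝟙 _ := by
  have h := braiding_naturality_left s Z
  rw [braiding_tensorUnit_left] at h
  rw [← cancel_mono ((λ_ Z).hom ≫ (ρ_ Z).inv), h]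
  monoidal

lemma mtrace_tensor {X Xd Y Yd : C} [ExactPairing X Xd] [ExactPairing Y Yd]
    (a : X ⟶ X) (b : Y ⟶ Y) :
    mtrace (X ⊗ Y) (Yd ⊗ Xd) (a ⊗ₘ b) = mtrace X Xd a ≫ mtrace Y Yd b := by
  calc mtrace (X ⊗ Y) (Yd ⊗ Xd) (a ⊗ₘ b)
      = η_ (X ⊗ Y) (Yd ⊗ Xd) ≫ (a ⊗ₘ b) ▷ (Yd ⊗ Xd) ≫
          (𝟙 _ ⊗≫ X ◁ ((β_ Y Yd).hom ≫ ε_ Y Yd) ▷ Xd ⊗≫ (β_ X Xd).hom ≫ ε_ X Xd) := by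
        rw [mtrace, ExactPairing.tensor_evaluation, braiding_comp_nestedCaps]
    _ = η_ X Xd ⊗≫ X ◁ (η_ Y Yd ≫ b ▷ Yd) ▷ Xd ⊗≫
          (a ▷ (Y ⊗ Yd) ≫ X ◁ ((β_ Y Yd).hom ≫ ε_ Y Yd)) ▷ Xd ⊗≫
          (β_ X Xd).hom ≫ ε_ X Xd := by
        rw [ExactPairing.tensor_coevaluation, tensorHom_def']
        monoidal
    _ = η_ X Xd ⊗≫ X ◁ (mtrace Y Yd b ▷ Xd) ⊗≫ a ▷ Xd ≫ (β_ X Xd).hom ≫ ε_ X Xd := by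
        rw [← whisker_exchange, mtrace]
        monoidal
    _ = η_ X Xd ⊗≫
          ((X ⊗ Xd) ◁ mtrace Y Yd b ≫ (a ▷ Xd ≫ (β_ X Xd).hom ≫ ε_ X Xd) ▷ 𝟙_ C) ⊗≫ 𝟙 _ := by
        rw [endUnit_whiskerRight_eq_whiskerLeft]
        monoidal
    _ = mtrace X Xd a ≫ mtrace Y Yd b := by
        rw [whisker_exchange]
        unfold mtrace
        monoidal

theorem trace_dim_and_multiplicative
    (X Xd Y Yd : C) [ExactPairing X Xd] [ExactPairing Y Yd]
    [ExactPairing (X ⊗ Y) (Yd ⊗ Xd)]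
    (a : X ⟶ X) (b : Y ⟶ Y) :
    -- the trace of the identity is coevaluation followed by evaluation
    mtrace X Xd (𝟙 X) = η_ X Xd ≫ (β_ X Xd).hom ≫ ε_ X Xd ∧
    -- multiplicativity of the trace
    mtrace (X ⊗ Y) (Yd ⊗ Xd) (a ⊗ₘ b) = mtrace X Xd a ≫ mtrace Y Yd b := by
  refine ⟨mtrace_id X Xd, ?_⟩
  rw [mtrace_congr_exactPairing (X ⊗ Y) (Yd ⊗ Xd) _ ExactPairing.tensor]
  exact mtrace_tensor a b

end Stmt13
end

section
/- For every n ≥ 1, the S¹-equivariant map Sym^n(S¹) → S¹/C_n sending (z₁,…,z_n) to an n-th root of the product z₁⋯z_n is a homotopy equivalence; consequently, over a field k of characteristic zero, the induced map of equivariant k-modules k[S¹] → k[Sym^n S¹] ≃ k[S¹/C_n] is an equivalence. -/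
/-!
STATEMENT 14: For every `n ≥ 1`, the `S¹`-equivariant map `Sym^n(S¹) → S¹/C_n`,
`(z₁, …, zₙ) ↦ ⁿ√(z₁ ⋯ zₙ)`, is a homotopy equivalence.

Model: `Sym^n(S¹)` is the quotient of `(S¹)^n` by the permutation action.  Composing with
the isomorphism `S¹/C_n ≅ S¹`, `x C_n ↦ xⁿ`, the map in question becomes the product map
`[z₁, …, zₙ] ↦ z₁ ⋯ zₙ`, and the `S¹`-equivariance (for the diagonal action on the source
and the residual action on `S¹/C_n`) becomes the identity `P(z·v) = zⁿ · P(v)`.  The claim: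
there is a homotopy equivalence `Sym^n(S¹) ≃ S¹` whose underlying map is the product map;
it intertwines the diagonal `S¹`-action with `z ↦ zⁿ`.  (Consequently, over a field `k` of
characteristic zero the induced map of `k`-linear chains `k[S¹] → k[Sym^n S¹]` is an
equivalence.)
-/

noncomputable section

namespace Stmt14

/-- equivalence up to permutation of the coordinates -/
def permSetoid (n : ℕ) : Setoid (Fin n → Circle) where
  r v w := ∃ σ : Equiv.Perm (Fin n), v ∘ σ = w
  iseqv := by
    constructor
    · intro v; exact ⟨Equiv.refl _, rfl⟩
    · rintro v w ⟨σ, rfl⟩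
      exact ⟨σ.symm, by funext i; simp⟩
    · rintro u v w ⟨σ, rfl⟩ ⟨τ, rfl⟩
      exact ⟨τ.trans σ, rfl⟩

/-- the symmetric power `Sym^n S¹`, with the quotient topology -/
def SymPow (n : ℕ) : Type := Quotient (permSetoid n)

instance (n : ℕ) : TopologicalSpace (SymPow n) :=
  instTopologicalSpaceQuotient

end Stmt14

/-!
The product map `Sym^n(S¹) → S¹` has the section `w ↦ [w, 1, …, 1]`, and the composite
`section ∘ product` is homotopic to the identity: read `[v₁, …, vₙ]` as the monic polynomial
`∏ (X - vᵢ)` and move its coefficients along the straight line to those of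
`(X - ∏ vᵢ) (X - 1)ⁿ⁻¹`. The constant coefficient stays `(-1)ⁿ ∏ vᵢ`, so the moduli of the roots
keep product `1`, and the coefficients stay bounded, so the roots stay in a fixed compact annulus.
On tuples from that annulus the coefficient map is a closed map onto its image whose fibres are
the permutation orbits; hence projecting the roots radially back to the circle depends
continuously on the coefficients.
-/

open Polynomial Topology

theorem Equiv.Perm.exists_comp_eq_of_map_univ_eq {ι α : Type*} [Fintype ι] {u w : ι → α}
    (h : Finset.univ.val.map u = Finset.univ.val.map w) : ∃ σ : Equiv.Perm ι, u ∘ σ = w := by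
  classical
  have hfiber (c : α) : Fintype.card {i // w i = c} = Fintype.card {i // u i = c} := by
    simpa [Fintype.card_subtype, Finset.card_def, Finset.filter_val, Multiset.count_map,
      eq_comm] using congrArg (Multiset.count c) h.symm
  exact ⟨Equiv.ofFiberEquiv fun c => Fintype.equivOfCardEq (hfiber c),
    funext (Equiv.ofFiberEquiv_map _)⟩

theorem inv_pow_le_of_prod_eq_one {ι : Type*} [Fintype ι] {f : ι → ℝ} {R : ℝ}
    (hf0 : ∀ i, 0 ≤ f i) (hfR : ∀ i, f i ≤ R) (hprod : ∏ i, f i = 1) (i : ι) :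
    (R ^ (Fintype.card ι - 1))⁻¹ ≤ f i := by
  classical
  set Q := ∏ j ∈ Finset.univ.erase i, f j
  have hmul : f i * Q = 1 := by rw [Finset.mul_prod_erase _ _ (Finset.mem_univ i), hprod]
  have hQpos : 0 < Q :=
    (Finset.prod_nonneg fun j _ => hf0 j).lt_of_ne (right_ne_zero_of_mul_eq_one hmul).symm
  have hQle : Q ≤ R ^ (Fintype.card ι - 1) := by
    calc Q ≤ ∏ _j ∈ Finset.univ.erase i, R :=
          Finset.prod_le_prod (fun j _ => hf0 j) (fun j _ => hfR j)
      _ = R ^ (Fintype.card ι - 1) := by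
          rw [Finset.prod_const, Finset.card_erase_of_mem (Finset.mem_univ i), Finset.card_univ]
  rw [eq_inv_of_mul_eq_one_left hmul]
  exact inv_anti₀ hQpos hQle

namespace Polynomial

theorem continuous_coeff_prod {X ι R : Type*} [TopologicalSpace X] [CommSemiring R]
    [TopologicalSpace R] [IsTopologicalSemiring R] (s : Finset ι) {f : ι → X → R[X]}
    (hf : ∀ i ∈ s, ∀ k, Continuous fun x => (f i x).coeff k) (k : ℕ) :
    Continuous fun x => (∏ i ∈ s, f i x).coeff k := by
  classical
  induction s using Finset.induction_on generalizing k with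
  | empty => simpa using continuous_const
  | insert i s hi ih =>
    simp only [Finset.prod_insert hi, coeff_mul]
    exact continuous_finsetSum _ fun p _ =>
      (hf i (s.mem_insert_self i) p.1).mul
        (ih (fun j hj => hf j (Finset.mem_insert_of_mem hj)) p.2)

theorem continuous_coeff_prod_X_sub_C {ι R : Type*} [Fintype ι] [CommRing R]
    [TopologicalSpace R] [IsTopologicalRing R] :
    Continuous fun u : ι → R => (∏ i, (X - C (u i))).coeff := by
  refine continuous_pi fun k => continuous_coeff_prod _ (fun i _ k => ?_) k
  simp only [coeff_sub, coeff_C]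
  split_ifs <;> fun_prop

theorem roots_fintype_prod_X_sub_C {ι R : Type*} [Fintype ι] [CommRing R] [IsDomain R]
    (u : ι → R) : (∏ i, (X - C (u i))).roots = Finset.univ.val.map u := by
  have h := roots_multiset_prod_X_sub_C (Finset.univ.val.map u)
  rwa [Multiset.map_map] at h

theorem exists_prod_X_sub_C_eq {k : Type*} [Field k] [IsAlgClosed k] {p : k[X]} {n : ℕ}
    (hp : p.Monic) (hn : p.natDegree = n) : ∃ u : Fin n → k, ∏ i, (X - C (u i)) = p := by
  obtain ⟨l, hl⟩ : ∃ l : List k, (l : Multiset k) = p.roots := Quot.exists_rep _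
  have hlen : l.length = n := by
    rw [← hn, ← IsAlgClosed.card_roots_eq_natDegree, ← hl]; rfl
  subst hlen
  refine ⟨fun i => l[i], ?_⟩
  have h := prod_multiset_X_sub_C_of_monic_of_roots_card_eq hp IsAlgClosed.card_roots_eq_natDegree
  rwa [← hl, ← List.ofFn_getElem (xs := l), ← Fin.univ_val_map, Multiset.map_map] at h

theorem coeff_zero_prod_X_sub_C {ι R : Type*} [Fintype ι] [CommRing R] (u : ι → R) :
    (∏ i, (X - C (u i))).coeff 0 = ∏ i, -u i := by
  simp [coeff_zero_eq_eval_zero, eval_prod]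

theorem norm_coeff_prod_X_sub_C_le {ι : Type*} [Fintype ι] {u : ι → ℂ} (hu : ∀ i, ‖u i‖ ≤ 1)
    (k : ℕ) : ‖(∏ i, (X - C (u i))).coeff k‖ ≤ 2 ^ Fintype.card ι := by
  have h := coeff_le_of_roots_le (f := RingHom.id ℂ) (B := 1) k
    (monic_prod_X_sub_C u Finset.univ) (IsAlgClosed.splits _) (by
      simp only [map_id, roots_fintype_prod_X_sub_C, Multiset.mem_map]
      rintro _ ⟨i, -, rfl⟩
      exact hu i)
  simp only [map_id, one_pow, one_mul, natDegree_finsetProd_X_sub_C_eq_card,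
    Finset.card_univ] at h
  exact h.trans (by exact_mod_cast Nat.choose_le_two_pow _ _)

theorem Monic.norm_lt_of_isRoot {p : ℂ[X]} (hp : p.Monic) {B : ℝ}
    (hB : ∀ k, ‖p.coeff k‖ ≤ B) {z : ℂ} (hz : p.IsRoot z) : ‖z‖ < B + 1 := by
  have hcauchy : cauchyBound p ≤ B.toNNReal + 1 := by
    rw [cauchyBound, hp.leadingCoeff, nnnorm_one, div_one]
    gcongr
    exact Finset.sup_le fun k _ => NNReal.le_toNNReal_of_coe_le (hB k)
  have h := NNReal.coe_lt_coe.2 ((hz.norm_lt_cauchyBound hp.ne_zero).trans_le hcauchy)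
  push_cast at h
  rwa [Real.coe_toNNReal _ ((norm_nonneg _).trans (hB 0))] at h

end Polynomial

def Complex.toCircle (z : ℂ) (hz : z ≠ 0) : Circle :=
  ⟨z / ‖z‖, by simp [Submonoid.unitSphere, hz]⟩

theorem Complex.toCircle_coe (w : Circle) : Complex.toCircle w w.coe_ne_zero = w :=
  Circle.ext (by simp [Complex.toCircle, Circle.norm_coe])

namespace Stmt14

section RootAnnulus

variable {n : ℕ}

/-- Cauchy's root bound for monic polynomials whose coefficients have norm at most `2 ^ n`. -/
def outerRadius (n : ℕ) : ℝ := 2 ^ n + 1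

def rootAnnulus (n : ℕ) : Set ℂ :=
  {z | (outerRadius n ^ (n - 1))⁻¹ ≤ ‖z‖ ∧ ‖z‖ ≤ outerRadius n}

variable (n) in
theorem one_le_outerRadius : 1 ≤ outerRadius n := by
  unfold outerRadius; linarith [pow_pos (two_pos (α := ℝ)) n]

theorem ne_zero_of_mem_rootAnnulus {z : ℂ} (hz : z ∈ rootAnnulus n) : z ≠ 0 :=
  norm_pos_iff.1 <| (inv_pos.2 (pow_pos (zero_lt_one.trans_le (one_le_outerRadius n)) _)).trans_le
    hz.1

theorem circle_mem_rootAnnulus (w : Circle) : (w : ℂ) ∈ rootAnnulus n := by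
  refine ⟨?_, ?_⟩ <;> rw [Circle.norm_coe]
  exacts [inv_le_one_of_one_le₀ (one_le_pow₀ (one_le_outerRadius n)), one_le_outerRadius n]

instance : CompactSpace (rootAnnulus n) :=
  isCompact_iff_compactSpace.1 <| Metric.isCompact_of_isClosed_isBounded
    ((isClosed_le continuous_const continuous_norm).inter
      (isClosed_le continuous_norm continuous_const))
    ((Metric.isBounded_closedBall (x := 0) (r := outerRadius n)).subset fun _ hz => by
      simpa using hz.2)

def coeffsOfRoots (u : Fin n → rootAnnulus n) : ℕ → ℂ := (∏ i, (X - C (u i : ℂ))).coeff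

variable (n) in
def rootsToCoeffs : C(Fin n → rootAnnulus n, Set.range (coeffsOfRoots (n := n))) :=
  ⟨Set.rangeFactorization coeffsOfRoots,
    (continuous_coeff_prod_X_sub_C.comp (continuous_pi fun i =>
      (continuous_apply i).subtype_val)).rangeFactorization⟩

variable (n) in
theorem isQuotientMap_rootsToCoeffs : IsQuotientMap (rootsToCoeffs n) :=
  (rootsToCoeffs n).continuous.isClosedMap.isQuotientMap (rootsToCoeffs n).continuous
    Set.rangeFactorization_surjective

variable (n) in
def normalizeRoots : C(Fin n → rootAnnulus n, SymPow n) :=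
  ⟨fun u => Quotient.mk _ fun i => Complex.toCircle (u i) (ne_zero_of_mem_rootAnnulus (u i).2),
    by
      refine continuous_quotient_mk'.comp (continuous_pi fun i => Continuous.subtype_mk ?_ _)
      have hu : Continuous fun u : Fin n → rootAnnulus n => (u i : ℂ) :=
        (continuous_apply i).subtype_val
      exact hu.div (by fun_prop) fun u => by
        simpa using ne_zero_of_mem_rootAnnulus (u i).2⟩

variable (n) in
theorem normalizeRoots_factorsThrough :
    Function.FactorsThrough (normalizeRoots n) (rootsToCoeffs n) := by
  intro u w huw
  have hpoly : ∏ i, (X - C (u i : ℂ)) = ∏ i, (X - C (w i : ℂ)) :=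
    Polynomial.coeff_injective (congrArg Subtype.val huw)
  have hroots := congrArg Polynomial.roots hpoly
  rw [roots_fintype_prod_X_sub_C, roots_fintype_prod_X_sub_C] at hroots
  obtain ⟨σ, hσ⟩ := Equiv.Perm.exists_comp_eq_of_map_univ_eq hroots
  refine Quotient.sound ⟨σ, funext fun i => ?_⟩
  have : u (σ i) = w i := Subtype.ext (congrFun hσ i)
  simp only [Function.comp_apply, this]

variable (n) in
def normalizedRoots : C(Set.range (coeffsOfRoots (n := n)), SymPow n) :=
  (isQuotientMap_rootsToCoeffs n).lift (normalizeRoots n) (normalizeRoots_factorsThrough n)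

theorem normalizedRoots_coeffsOfRoots (u : Fin n → rootAnnulus n) :
    normalizedRoots n ⟨coeffsOfRoots u, u, rfl⟩ = normalizeRoots n u :=
  DFunLike.congr_fun ((isQuotientMap_rootsToCoeffs n).lift_comp (normalizeRoots n)
    (normalizeRoots_factorsThrough n)) u

theorem coeff_mem_range_coeffsOfRoots {p : ℂ[X]} (hp : p.Monic) (hdeg : p.natDegree = n)
    (hcoeff : ∀ k, ‖p.coeff k‖ ≤ 2 ^ n) (hcoeff0 : ‖p.coeff 0‖ = 1) :
    p.coeff ∈ Set.range (coeffsOfRoots (n := n)) := by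
  obtain ⟨u, rfl⟩ := exists_prod_X_sub_C_eq hp hdeg
  have hR (i : Fin n) : ‖u i‖ ≤ outerRadius n :=
    (hp.norm_lt_of_isRoot hcoeff
      (by simpa [eval_prod, Finset.prod_eq_zero_iff] using ⟨i, sub_self _⟩)).le
  have hprod : ∏ i, ‖u i‖ = 1 := by
    rw [coeff_zero_prod_X_sub_C, norm_prod] at hcoeff0
    simpa using hcoeff0
  have hr (i : Fin n) : (outerRadius n ^ (n - 1))⁻¹ ≤ ‖u i‖ := by
    simpa using inv_pow_le_of_prod_eq_one (fun _ => norm_nonneg _) hR hprod i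
  exact ⟨fun i => ⟨u i, hr i, hR i⟩, rfl⟩

end RootAnnulus

section Contraction

variable {n : ℕ}

def circlePoly (v : Fin n → Circle) : ℂ[X] := ∏ i, (X - C (v i : ℂ))

def circleTuple (v : Fin n → Circle) : Fin n → rootAnnulus n :=
  fun i => ⟨v i, circle_mem_rootAnnulus (v i)⟩

theorem normalizeRoots_circleTuple (v : Fin n → Circle) :
    normalizeRoots n (circleTuple v) = Quotient.mk _ v :=
  congrArg _ (funext fun i => Complex.toCircle_coe (v i))

theorem natDegree_circlePoly (v : Fin n → Circle) : (circlePoly v).natDegree = n := by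
  simp [circlePoly]

theorem coeff_circlePoly_self (v : Fin n → Circle) : (circlePoly v).coeff n = 1 := by
  simpa [circlePoly] using (monic_prod_X_sub_C (fun i => (v i : ℂ)) Finset.univ).coeff_natDegree

theorem coeff_zero_circlePoly (v : Fin n → Circle) :
    (circlePoly v).coeff 0 = (-1) ^ n * ((∏ i, v i : Circle) : ℂ) := by
  rw [circlePoly, coeff_zero_prod_X_sub_C, Finset.prod_neg, Finset.card_univ, Fintype.card_fin]
  exact congrArg _ (map_prod Circle.coeHom _ _).symm

theorem norm_coeff_circlePoly_le (v : Fin n → Circle) (k : ℕ) :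
    ‖(circlePoly v).coeff k‖ ≤ 2 ^ n := by
  simpa [circlePoly] using norm_coeff_prod_X_sub_C_le (fun i => (Circle.norm_coe (v i)).le) k

theorem circlePoly_comp_perm (v : Fin n → Circle) (σ : Equiv.Perm (Fin n)) :
    circlePoly (v ∘ σ) = circlePoly v :=
  Equiv.prod_comp σ fun i => X - C (v i : ℂ)

theorem continuous_coeff_circlePoly (k : ℕ) :
    Continuous fun v : Fin n → Circle => (circlePoly v).coeff k :=
  (continuous_apply k).comp <| continuous_coeff_prod_X_sub_C.comp <|
    continuous_pi fun i => continuous_subtype_val.comp (continuous_apply i)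

theorem coeff_segment_mem_range {v w : Fin n → Circle} (hvw : ∏ i, v i = ∏ i, w i)
    (t : unitInterval) :
    ((1 - (t : ℝ)) • circlePoly v + (t : ℝ) • circlePoly w).coeff ∈
      Set.range (coeffsOfRoots (n := n)) := by
  set p := (1 - (t : ℝ)) • circlePoly v + (t : ℝ) • circlePoly w
  have hle : p.natDegree ≤ n :=
    natDegree_add_le_of_degree_le
      ((natDegree_smul_le _ _).trans (natDegree_circlePoly v).le)
      ((natDegree_smul_le _ _).trans (natDegree_circlePoly w).le)
  have hlead : p.coeff n = 1 := by
    simp [p, coeff_circlePoly_self]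
  refine coeff_mem_range_coeffsOfRoots (monic_of_natDegree_le_of_coeff_eq_one n hle hlead)
    (natDegree_eq_of_le_of_coeff_ne_zero hle (hlead ▸ one_ne_zero)) (fun k => ?_) ?_
  · have hball := convex_closedBall (0 : ℂ) (2 ^ n)
      (mem_closedBall_zero_iff.2 (norm_coeff_circlePoly_le v k))
      (mem_closedBall_zero_iff.2 (norm_coeff_circlePoly_le w k))
      (sub_nonneg.2 t.2.2) t.2.1 (sub_add_cancel 1 (t : ℝ))
    simpa [p] using hball
  · have hp0 : p.coeff 0 = (-1) ^ n * ((∏ i, w i : Circle) : ℂ) := by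
      simp only [p, coeff_add, coeff_smul, coeff_zero_circlePoly, hvw, Complex.real_smul]
      push_cast
      ring
    rw [hp0, norm_mul, norm_pow, norm_neg, norm_one, one_pow, one_mul, Circle.norm_coe]

variable (n) in
def symProd : C(SymPow n, Circle) :=
  ⟨Quotient.lift (fun v => ∏ i, v i) fun v _ ⟨σ, hσ⟩ => hσ ▸ (Equiv.prod_comp σ v).symm,
    continuous_quot_lift _ (continuous_finsetProd _ fun i _ => continuous_apply i)⟩

variable [NeZero n]

variable (n) in
def symProdSection : C(Circle, SymPow n) :=
  ⟨fun w => Quotient.mk _ (Pi.mulSingle 0 w),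
    continuous_quot_mk.comp (continuous_mulSingle (A := fun _ : Fin n => Circle) 0)⟩

theorem symProd_comp_symProdSection :
    (symProd n).comp (symProdSection n) = ContinuousMap.id Circle :=
  ContinuousMap.ext fun w => Fintype.prod_pi_mulSingle' (0 : Fin n) w

def contraction (v : Fin n → Circle) (t : unitInterval) : SymPow n :=
  normalizedRoots n ⟨_, coeff_segment_mem_range (Fintype.prod_pi_mulSingle' 0 (∏ i, v i)).symm t⟩

theorem continuous_contraction :
    Continuous fun p : unitInterval × (Fin n → Circle) => contraction p.2 p.1 := by
  refine (normalizedRoots n).continuous.comp (Continuous.subtype_mk (continuous_pi fun k => ?_) _)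
  have hsection : Continuous fun v : Fin n → Circle => Pi.mulSingle (0 : Fin n) (∏ i, v i) :=
    (continuous_mulSingle (A := fun _ : Fin n => Circle) 0).comp (by fun_prop)
  simp only [coeff_add, coeff_smul, Complex.real_smul]
  have hv : Continuous fun p : unitInterval × (Fin n → Circle) => (circlePoly p.2).coeff k :=
    (continuous_coeff_circlePoly k).comp continuous_snd
  have hw : Continuous fun p : unitInterval × (Fin n → Circle) =>
      (circlePoly (Pi.mulSingle 0 (∏ i, p.2 i))).coeff k :=
    ((continuous_coeff_circlePoly k).comp hsection).comp continuous_snd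
  fun_prop

theorem contraction_comp_perm (v : Fin n → Circle) (σ : Equiv.Perm (Fin n)) (t : unitInterval) :
    contraction (v ∘ σ) t = contraction v t := by
  simp only [contraction, circlePoly_comp_perm, Function.comp_apply, Equiv.prod_comp σ v]

theorem contraction_zero (v : Fin n → Circle) : contraction v 0 = Quotient.mk _ v := by
  have h : (⟨_, coeff_segment_mem_range (Fintype.prod_pi_mulSingle' 0 (∏ i, v i)).symm 0⟩ :
      Set.range (coeffsOfRoots (n := n))) = ⟨coeffsOfRoots (circleTuple v), _, rfl⟩ :=
    Subtype.ext (by simp [coeffsOfRoots, circleTuple, circlePoly])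
  rw [contraction, h, normalizedRoots_coeffsOfRoots, normalizeRoots_circleTuple]

theorem contraction_one (v : Fin n → Circle) :
    contraction v 1 = symProdSection n (symProd n (Quotient.mk _ v)) := by
  have h : (⟨_, coeff_segment_mem_range (Fintype.prod_pi_mulSingle' 0 (∏ i, v i)).symm 1⟩ :
      Set.range (coeffsOfRoots (n := n))) =
        ⟨coeffsOfRoots (circleTuple (Pi.mulSingle 0 (∏ i, v i))), _, rfl⟩ :=
    Subtype.ext (by simp [coeffsOfRoots, circleTuple, circlePoly])
  rw [contraction, h, normalizedRoots_coeffsOfRoots, normalizeRoots_circleTuple]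
  rfl

def contractionSym (p : unitInterval × SymPow n) : SymPow n :=
  Quotient.liftOn p.2 (fun v => contraction v p.1) fun v _ ⟨σ, hσ⟩ =>
    hσ ▸ (contraction_comp_perm v σ p.1).symm

theorem contractionSym_mk (t : unitInterval) (v : Fin n → Circle) :
    contractionSym (t, Quotient.mk _ v) = contraction v t :=
  rfl

theorem continuous_contractionSym : Continuous (contractionSym (n := n)) := by
  have h : Continuous fun p : unitInterval × (Fin n → Circle) =>
      contractionSym (p.1, Quotient.mk (permSetoid n) p.2) := by
    simpa only [contractionSym_mk] using continuous_contraction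
  exact (isQuotientMap_quotient_mk' (s := permSetoid n)).continuous_lift_prod_right h

variable (n) in
def contractionHomotopy :
    (ContinuousMap.id (SymPow n)).Homotopy ((symProdSection n).comp (symProd n)) where
  toFun := contractionSym
  continuous_toFun := continuous_contractionSym
  map_zero_left := Quotient.ind contraction_zero
  map_one_left := Quotient.ind contraction_one

end Contraction

theorem symmetric_power_circle_homotopy_equiv (n : ℕ) (hn : 1 ≤ n) :
    ∃ e : ContinuousMap.HomotopyEquiv (SymPow n) Circle,
      (∀ v : Fin n → Circle,
        e.toFun (Quotient.mk (permSetoid n) v) = ∏ i, v i) ∧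
      (∀ (z : Circle) (v : Fin n → Circle),
        e.toFun (Quotient.mk (permSetoid n) (fun i => z * v i)) =
          z ^ n * e.toFun (Quotient.mk (permSetoid n) v)) := by
  have : NeZero n := ⟨Nat.one_le_iff_ne_zero.mp hn⟩
  refine ⟨⟨symProd n, symProdSection n, ⟨(contractionHomotopy n).symm⟩, ?_⟩,
    fun v => rfl, fun z v => ?_⟩
  · rw [symProd_comp_symProdSection]
  · show ∏ i, z * v i = z ^ n * ∏ i, v i
    rw [Finset.prod_mul_distrib, Finset.prod_const, Finset.card_univ, Fintype.card_fin]

end Stmt14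
end
end
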